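/- Let M be a strictly totally ordered monoid with at least two elements (a monoid with a total order such that g < g' implies gh < g'h and hg < hg' for all g, g', h ∈ M) and let R be an M-central Armendariz ring. Then R is a right p.p.-ring if and only if the monoid ring R[M] is a right p.p.-ring. -/

import Mathlib

/-!
Central Armendariz with `|M| ≥ 2` forces idempotents of `R` to be central: for `z = e r (1 - e)`
the product `(e + z u) (1 - e - z u)` vanishes in `R[M]`, so `-z` is central and hence zero.
An abelian right p.p.-ring is reduced, and over a reduced ring `αβ = 0` in `R[M]` forces all
products of coefficients to vanish, so the right annihilator of `α` is generated by `e · 1`,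
where `e R` is the intersection of the (commuting, idempotent-generated) right annihilators of
the coefficients of `α`. Conversely `R` is a ring retract of `R[M]` through the augmentation,
and retracts of right p.p.-rings are right p.p.
-/

open MonoidAlgebra

def IsRightPP (S : Type*) [Semiring S] : Prop :=
  ∀ a : S, ∃ e : S, IsIdempotentElem e ∧ ∀ x : S, a * x = 0 ↔ ∃ r : S, x = e * r

def IsCentralArmendariz (R M : Type*) [Semiring R] [Mul M] : Prop :=
  ∀ α β : R[M], α * β = 0 →
    ∀ g ∈ α.coeff.support, ∀ h ∈ β.coeff.support, α.coeff g * β.coeff h ∈ Set.center R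

def IsAbelianRing (R : Type*) [Semiring R] : Prop :=
  ∀ e : R, IsIdempotentElem e → ∀ r, Commute e r

lemma IsIdempotentElem.exists_eq_mul_iff {S : Type*} [Semigroup S] {e x : S}
    (he : IsIdempotentElem e) : (∃ r, x = e * r) ↔ e * x = x := by
  refine ⟨?_, fun h => ⟨x, h.symm⟩⟩
  rintro ⟨r, rfl⟩
  rw [← mul_assoc, he.eq]

lemma mul_eq_zero_comm_of_isReduced {R : Type*} [MonoidWithZero R] [IsReduced R] {a b : R}
    (h : a * b = 0) : b * a = 0 :=
  eq_zero_of_pow_eq_zero (n := 2) <| by rw [sq, mul_assoc, ← mul_assoc a, h, zero_mul, mul_zero]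

section RightPP

variable {R : Type*} [Semiring R]

theorem IsRightPP.isReduced (habel : IsAbelianRing R) (hpp : IsRightPP R) : IsReduced R := by
  refine (isReduced_iff_pow_one_lt 2 one_lt_two).2 fun a ha => ?_
  obtain ⟨e, he, hann⟩ := hpp a
  have hea : e * a = a := he.exists_eq_mul_iff.1 ((hann a).1 (by rwa [← sq]))
  have hae : a * e = 0 := (hann e).2 ⟨1, (mul_one e).symm⟩
  rw [← hea, habel e he a, hae]

theorem IsRightPP.exists_isIdempotentElem_forall_mul_eq_zero_iff
    (habel : IsAbelianRing R) (hpp : IsRightPP R) {ι : Type*} (s : Finset ι) (a : ι → R) :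
    ∃ e : R, IsIdempotentElem e ∧ ∀ x : R, (∀ i ∈ s, a i * x = 0) ↔ e * x = x := by
  classical
  induction s using Finset.induction_on with
  | empty => exact ⟨1, .one, by simp⟩
  | insert i s _ ih =>
    obtain ⟨e, he, hs⟩ := ih
    obtain ⟨f, hf, hi⟩ := hpp (a i)
    refine ⟨f * e, IsIdempotentElem.mul_of_commute (habel f hf e) hf he, fun x => ?_⟩
    rw [Finset.forall_mem_insert, hi, hf.exists_eq_mul_iff, hs]
    constructor
    · rintro ⟨hfx, hex⟩
      rw [mul_assoc, hex, hfx]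
    · intro hx
      refine ⟨by rw [← hx, ← mul_assoc, ← mul_assoc, hf.eq], ?_⟩
      rw [← hx, (habel f hf e).eq, ← mul_assoc, ← mul_assoc, he.eq]

theorem IsRightPP.of_leftInverse {S : Type*} [Semiring S] (i : R →+* S) (f : S →+* R)
    (hfi : Function.LeftInverse f i) (hS : IsRightPP S) : IsRightPP R := by
  intro a
  obtain ⟨E, hE, hann⟩ := hS (i a)
  refine ⟨f E, hE.map f, fun x => ⟨fun hx => ?_, ?_⟩⟩
  · obtain ⟨r, hr⟩ := (hann (i x)).1 (by rw [← map_mul, hx, map_zero])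
    exact ⟨f r, by rw [← map_mul, ← hr, hfi]⟩
  · rintro ⟨r, rfl⟩
    have haE : i a * E = 0 := (hann E).2 ⟨1, (mul_one E).symm⟩
    rw [← mul_assoc, ← hfi a, ← map_mul, haE, map_zero, zero_mul]

end RightPP

section CentralArmendariz

variable {R M : Type*} [Ring R] [Monoid M] [Nontrivial M]

lemma IsCentralArmendariz.mul_mul_one_sub_eq_zero (hR : IsCentralArmendariz R M) {e : R}
    (he : IsIdempotentElem e) (r : R) : e * r * (1 - e) = 0 := by
  classical
  obtain ⟨u, hu⟩ := exists_ne (1 : M)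
  set z := e * r * (1 - e)
  by_contra hz
  have hez : e * z = z := by simp only [z, ← mul_assoc, he.eq]
  have hze : z * e = 0 := by simp only [z, mul_assoc, sub_mul, one_mul, he.eq, sub_self, mul_zero]
  have hz1e : z * (1 - e) = z := by rw [mul_sub, mul_one, hze, sub_zero]
  have hzz : z * z = 0 := by nth_rw 2 [← hez]; rw [← mul_assoc, hze, zero_mul]
  have he1e : e * (1 - e) = 0 := by rw [mul_sub, mul_one, he.eq, sub_self]
  have hmul : (single 1 e + single u z) * (single 1 (1 - e) - single u z : R[M]) = 0 := by
    simp only [add_mul, mul_sub, single_mul_single, one_mul, mul_one, he1e, hez, hz1e, hzz,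
      single_zero]
    abel
  have hcentral := hR _ _ hmul 1 (by simpa [hu.symm] using fun he0 => hz (by simp [z, he0])) u
    (by simp [hu, hz])
  simp only [coeff_add, coeff_sub, coeff_single, Finsupp.add_apply, Finsupp.sub_apply,
    Finsupp.single_eq_same, Finsupp.single_eq_of_ne hu, Finsupp.single_eq_of_ne hu.symm, add_zero,
    zero_sub, mul_neg, hez] at hcentral
  have := Semigroup.mem_center_iff.1 hcentral e
  rw [mul_neg, hez, neg_mul, hze, neg_zero, neg_eq_zero] at this
  exact hz this

lemma IsCentralArmendariz.isAbelianRing (hR : IsCentralArmendariz R M) : IsAbelianRing R := by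
  intro e he r
  have h₁ := hR.mul_mul_one_sub_eq_zero he r
  have h₂ := hR.mul_mul_one_sub_eq_zero he.one_sub r
  rw [sub_sub_cancel, sub_mul, sub_mul, one_mul, sub_eq_zero] at h₂
  rw [mul_sub, mul_one, sub_eq_zero] at h₁
  exact h₁.trans h₂.symm

end CentralArmendariz

namespace MonoidAlgebra

theorem coeff_mul_coeff_eq_zero_of_mul_eq_zero {R M : Type*} [Semiring R] [IsReduced R] [Mul M]
    [LinearOrder M] [MulLeftStrictMono M] [MulRightStrictMono M]
    {α β : R[M]} (hαβ : α * β = 0) (g h : M) : α.coeff g * β.coeff h = 0 := by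
  classical
  by_contra hne
  set S := (α.coeff.support ×ˢ β.coeff.support).filter fun p => α.coeff p.1 * β.coeff p.2 ≠ 0
  have hmem : ∀ g h, α.coeff g * β.coeff h ≠ 0 → (g, h) ∈ S := fun g h hne => by
    simpa [S, hne] using ⟨left_ne_zero_of_mul hne, right_ne_zero_of_mul hne⟩
  -- A counterexample `(g, h)` minimal for the lexicographic order on `(g * h, g)`: multiplying
  -- the coefficient of `g * h` in `αβ` on the right by `α g` kills every other term.
  obtain ⟨⟨g, h⟩, hgh, hmin⟩ :=
    S.exists_min_image (fun p => toLex (p.1 * p.2, p.1)) ⟨_, hmem g h hne⟩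
  have hmin' : ∀ g' h', toLex (g' * h', g') < toLex (g * h, g) →
      α.coeff g' * β.coeff h' = 0 := fun g' h' hlt => by
    by_contra hne'
    exact (hmin (g', h') (hmem g' h' hne')).not_gt hlt
  have hterm : ∀ p ∈ α.coeff.support ×ˢ β.coeff.support, p ≠ (g, h) →
      (if p.1 * p.2 = g * h then α.coeff p.1 * β.coeff p.2 else 0) * α.coeff g = 0 := by
    rintro ⟨g', h'⟩ - hp
    dsimp only
    split_ifs with heq
    · rcases lt_trichotomy g' g with hlt | rfl | hlt
      · rw [hmin' g' h' (Prod.Lex.toLex_lt_toLex.2 (Or.inr ⟨heq, hlt⟩)), zero_mul]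
      · exact (hp (by rw [mul_right_strictMono.injective heq])).elim
      · have : toLex (g * h', g) < toLex (g * h, g) :=
          Prod.Lex.toLex_lt_toLex.2 (Or.inl (heq ▸ mul_lt_mul_left hlt h'))
        rw [mul_assoc, mul_eq_zero_comm_of_isReduced (hmin' g h' this), mul_zero]
    · exact zero_mul _
  have hcoeff : (α * β).coeff (g * h) * α.coeff g = α.coeff g * β.coeff h * α.coeff g := by
    simp_rw [coeff_mul, Finsupp.sum, Finset.sum_mul]
    rw [← Finset.sum_product', Finset.sum_eq_single (g, h) hterm
      (fun h => absurd (Finset.mem_filter.1 hgh).1 h), if_pos rfl]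
  rw [hαβ, coeff_zero, Finsupp.zero_apply, zero_mul, eq_comm] at hcoeff
  refine (Finset.mem_filter.1 hgh).2 (eq_zero_of_pow_eq_zero (n := 2) ?_)
  rw [sq, ← mul_assoc, hcoeff, zero_mul]

variable {R M : Type*} [Ring R] [Monoid M]

theorem isRightPP [LinearOrder M] [MulLeftStrictMono M] [MulRightStrictMono M]
    (habel : IsAbelianRing R) (hpp : IsRightPP R) :
    IsRightPP R[M] := by
  have := hpp.isReduced habel
  intro α
  obtain ⟨e, he, hann⟩ :=
    hpp.exists_isIdempotentElem_forall_mul_eq_zero_iff habel α.coeff.support α.coeff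
  have hE : IsIdempotentElem (single 1 e : R[M]) := by
    rw [IsIdempotentElem, single_mul_single, one_mul, he.eq]
  refine ⟨single 1 e, hE, fun x => ?_⟩
  rw [hE.exists_eq_mul_iff]
  constructor
  · intro hαx
    ext h
    rw [coeff_single_one_mul, ← hann]
    exact fun g _ => coeff_mul_coeff_eq_zero_of_mul_eq_zero hαx g h
  · intro hx
    have hαe : α * single 1 e = 0 := by
      ext g
      rw [coeff_mul_single_one, coeff_zero, Finsupp.zero_apply]
      by_cases hg : g ∈ α.coeff.support
      · exact (hann e).2 he.eq g hg
      · rw [Finsupp.notMem_support_iff.1 hg, zero_mul]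
    rw [← hx, ← mul_assoc, hαe, zero_mul]

noncomputable def augmentation : R[M] →+* R :=
  liftNCRingHom (RingHom.id R) 1 fun _ _ => .one_right _

@[simp]
lemma augmentation_single (m : M) (r : R) : augmentation (single m r) = r := by
  simp [augmentation]

end MonoidAlgebra

/-- Let `M` be a strictly totally ordered monoid with `|M| ≥ 2` and `R` an `M`-central
Armendariz ring. Then `R` is a right p.p.-ring iff `R[M]` is a right p.p.-ring. -/
theorem stmt_12 (M R : Type*) [Monoid M] [Nontrivial M] [LinearOrder M] [Ring R]
    (hstrict₁ : ∀ g g' h : M, g < g' → g * h < g' * h)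
    (hstrict₂ : ∀ g g' h : M, g < g' → h * g < h * g')
    (hCA : ∀ α β : MonoidAlgebra R M, α * β = 0 →
      ∀ g ∈ α.coeff.support, ∀ h ∈ β.coeff.support, α.coeff g * β.coeff h ∈ Set.center R) :
    (∀ a : R, ∃ e : R, IsIdempotentElem e ∧
        ∀ x : R, a * x = 0 ↔ ∃ r : R, x = e * r) ↔
      (∀ a : MonoidAlgebra R M, ∃ e : MonoidAlgebra R M, IsIdempotentElem e ∧
        ∀ x : MonoidAlgebra R M, a * x = 0 ↔ ∃ r : MonoidAlgebra R M, x = e * r) := by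
  have : MulLeftStrictMono M := ⟨fun h _ _ hlt => hstrict₂ _ _ h hlt⟩
  have : MulRightStrictMono M := ⟨fun h _ _ hlt => hstrict₁ _ _ h hlt⟩
  have habel : IsAbelianRing R := IsCentralArmendariz.isAbelianRing (M := M) hCA
  exact ⟨isRightPP habel,
    IsRightPP.of_leftInverse singleOneRingHom augmentation (augmentation_single 1)⟩
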